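/- Assume the direct-system setup with the interleaving hypothesis (H) and properties (S) and (K), and assume in addition that G^k_∞ is isomorphic to ℤ (as an abelian group) for every k ∈ ℕ. Then F_∞ is isomorphic to ℤ. -/

import Mathlib

/-!
Conditions (S) and (K) say exactly that `j2 n (n+1)` factors through the limit map `j n`; the
factor `limitSection n : G∞ → G (n+1)` is a section of `j (n+1)`. An interleaving of length `N`
then yields `toLimit n : F n → G∞` and `ofLimit n : G∞ → F (n+3)` with
`ofLimit n ∘ toLimit n = i2 n (n+3)` and `toLimit (n+3) ∘ ofLimit n = id`, where `toLimit` is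
compatible with the transition maps and onto in positive degrees. As interleavings of every length
exist, `i 1` is onto and its kernel is that of `i2 1 4`. Hence `i 4 ∘ ofLimit 1 : G∞ → F∞` is an
isomorphism, and `F∞ ≅ G∞ ≅ ℤ`.
-/

open Function

namespace DirectLimitInterleaving

variable {F : ℕ → Type*} [∀ n, AddCommGroup (F n)]

section FixedSystem

variable {G : ℕ → Type*} [∀ n, AddCommGroup (G n)] {Ginf : Type*} [AddCommGroup Ginf]

section LimitSection

variable {j2 : ∀ n m : ℕ, n ≤ m → G n →+ G m} {j : ∀ n, G n →+ Ginf}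
  (hS : ∀ n, Surjective (j n)) (hK : ∀ n (y : G n), j n y = 0 → j2 n (n + 1) n.le_succ y = 0)

noncomputable def limitSection (n : ℕ) : Ginf →+ G (n + 1) :=
  (j n).liftOfSurjective (hS n) ⟨j2 n (n + 1) n.le_succ, hK n⟩

theorem limitSection_apply (n : ℕ) (y : G n) :
    limitSection hS hK n (j n y) = j2 n (n + 1) n.le_succ y :=
  (j n).liftOfRightInverse_comp_apply _ _ _ y

theorem apply_limitSection (hjcompat : ∀ n m (h : n ≤ m) (y : G n), j m (j2 n m h y) = j n y)
    (n : ℕ) (z : Ginf) : j (n + 1) (limitSection hS hK n z) = z := by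
  obtain ⟨y, rfl⟩ := hS n z
  rw [limitSection_apply, hjcompat]

end LimitSection

structure Interleaving (i2 : ∀ n m : ℕ, n ≤ m → F n →+ F m)
    (j2 : ∀ n m : ℕ, n ≤ m → G n →+ G m) (N : ℕ) where
  a : ∀ n, F n →+ G (n + 1)
  b : ∀ n, G n →+ F (n + 1)
  a_comm : ∀ n, n + 1 ≤ N → ∀ x : F n,
    a (n + 1) (i2 n (n + 1) n.le_succ x) = j2 (n + 1) (n + 2) (n + 1).le_succ (a n x)
  b_a : ∀ n, n + 1 ≤ N → ∀ x : F n, b (n + 1) (a n x) = i2 n (n + 2) (n.le_add_right 2) x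
  a_b : ∀ n, n + 1 ≤ N → ∀ y : G n, a (n + 1) (b n y) = j2 n (n + 2) (n.le_add_right 2) y

namespace Interleaving

variable {i2 : ∀ n m : ℕ, n ≤ m → F n →+ F m} {j2 : ∀ n m : ℕ, n ≤ m → G n →+ G m}
  {j : ∀ n, G n →+ Ginf} {N : ℕ}

variable (j) in
def toLimit (I : Interleaving i2 j2 N) (n : ℕ) : F n →+ Ginf := (j (n + 1)).comp (I.a n)

theorem toLimit_i2_succ (I : Interleaving i2 j2 N)
    (hjcompat : ∀ n m (h : n ≤ m) (y : G n), j m (j2 n m h y) = j n y) {n : ℕ}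
    (hn : n + 1 ≤ N) (x : F n) :
    I.toLimit j (n + 1) (i2 n (n + 1) n.le_succ x) = I.toLimit j n x := by
  rw [toLimit, toLimit, AddMonoidHom.comp_apply, AddMonoidHom.comp_apply, I.a_comm n hn, hjcompat]

theorem toLimit_b (I : Interleaving i2 j2 N)
    (hjcompat : ∀ n m (h : n ≤ m) (y : G n), j m (j2 n m h y) = j n y) {n : ℕ}
    (hn : n + 1 ≤ N) (y : G n) : I.toLimit j (n + 1) (I.b n y) = j n y := by
  rw [toLimit, AddMonoidHom.comp_apply, I.a_b n hn, hjcompat]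

theorem toLimit_surjective (I : Interleaving i2 j2 N) (hS : ∀ n, Surjective (j n))
    (hjcompat : ∀ n m (h : n ≤ m) (y : G n), j m (j2 n m h y) = j n y) {n : ℕ}
    (hn : n + 1 ≤ N) : Surjective (I.toLimit j (n + 1)) := fun z ↦ by
  obtain ⟨y, rfl⟩ := hS n z
  exact ⟨I.b n y, I.toLimit_b hjcompat hn y⟩

noncomputable def ofLimit (I : Interleaving i2 j2 N) (hS : ∀ n, Surjective (j n))
    (hK : ∀ n (y : G n), j n y = 0 → j2 n (n + 1) n.le_succ y = 0) (n : ℕ) :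
    Ginf →+ F (n + 3) :=
  (I.b (n + 2)).comp (limitSection hS hK (n + 1))

theorem toLimit_ofLimit (I : Interleaving i2 j2 N) (hS : ∀ n, Surjective (j n))
    (hK : ∀ n (y : G n), j n y = 0 → j2 n (n + 1) n.le_succ y = 0)
    (hjcompat : ∀ n m (h : n ≤ m) (y : G n), j m (j2 n m h y) = j n y) {n : ℕ}
    (hn : n + 3 ≤ N) (z : Ginf) : I.toLimit j (n + 3) (I.ofLimit hS hK n z) = z := by
  rw [ofLimit, toLimit, AddMonoidHom.comp_apply, AddMonoidHom.comp_apply, I.a_b (n + 2) hn,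
    hjcompat, apply_limitSection hS hK hjcompat]

variable [DirectedSystem F (i2 · · ·)]

theorem toLimit_i2 (I : Interleaving i2 j2 N)
    (hjcompat : ∀ n m (h : n ≤ m) (y : G n), j m (j2 n m h y) = j n y) {n m : ℕ}
    (h : n ≤ m) (hm : m ≤ N) (x : F n) : I.toLimit j m (i2 n m h x) = I.toLimit j n x := by
  induction m, h using Nat.le_induction with
  | base => rw [DirectedSystem.map_self (f := (i2 · · ·))]
  | succ m hnm ih =>
    rw [← DirectedSystem.map_map (f := (i2 · · ·)) hnm m.le_succ, I.toLimit_i2_succ hjcompat hm,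
      ih (by omega)]

theorem ofLimit_toLimit (I : Interleaving i2 j2 N) (hS : ∀ n, Surjective (j n))
    (hK : ∀ n (y : G n), j n y = 0 → j2 n (n + 1) n.le_succ y = 0) {n : ℕ}
    (hn : n + 2 ≤ N) (x : F n) :
    I.ofLimit hS hK n (I.toLimit j n x) = i2 n (n + 3) (n.le_add_right 3) x := by
  rw [ofLimit, toLimit, AddMonoidHom.comp_apply, AddMonoidHom.comp_apply, limitSection_apply,
    ← I.a_comm n (by omega), I.b_a (n + 1) hn, DirectedSystem.map_map (f := (i2 · · ·))]

theorem i2_eq_zero_of_i2_eq_zero (I : Interleaving i2 j2 N) (hS : ∀ n, Surjective (j n))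
    (hK : ∀ n (y : G n), j n y = 0 → j2 n (n + 1) n.le_succ y = 0)
    (hjcompat : ∀ n m (h : n ≤ m) (y : G n), j m (j2 n m h y) = j n y) {n m : ℕ}
    (hn : n + 2 ≤ N) (h : n ≤ m) (hm : m ≤ N) {x : F n} (hx : i2 n m h x = 0) :
    i2 n (n + 3) (n.le_add_right 3) x = 0 := by
  rw [← I.ofLimit_toLimit hS hK hn, ← I.toLimit_i2 hjcompat h hm, hx, map_zero, map_zero]

theorem range_i2_le_range_i2 (I : Interleaving i2 j2 N) (hS : ∀ n, Surjective (j n))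
    (hK : ∀ n (y : G n), j n y = 0 → j2 n (n + 1) n.le_succ y = 0)
    (hjcompat : ∀ n m (h : n ≤ m) (y : G n), j m (j2 n m h y) = j n y) {n m : ℕ}
    (h : n + 1 ≤ m) (hm : m + 2 ≤ N) :
    (i2 m (m + 3) (m.le_add_right 3)).range ≤
      (i2 (n + 1) (m + 3) (h.trans (m.le_add_right 3))).range := by
  rintro _ ⟨x, rfl⟩
  obtain ⟨x', hx'⟩ := I.toLimit_surjective hS hjcompat (n := n) (by omega) (I.toLimit j m x)
  refine ⟨x', ?_⟩
  calc i2 (n + 1) (m + 3) _ x' = i2 m (m + 3) _ (i2 (n + 1) m h x') :=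
        (DirectedSystem.map_map (f := (i2 · · ·)) h _ x').symm
    _ = I.ofLimit hS hK m (I.toLimit j m (i2 (n + 1) m h x')) :=
        (I.ofLimit_toLimit hS hK hm _).symm
    _ = I.ofLimit hS hK m (I.toLimit j m x) := by rw [I.toLimit_i2 hjcompat h (by omega), hx']
    _ = i2 m (m + 3) _ x := I.ofLimit_toLimit hS hK hm x

end Interleaving

end FixedSystem

section DirectLimit

variable {Finf : Type*} [AddCommGroup Finf] {i2 : ∀ n m : ℕ, n ≤ m → F n →+ F m}
  [DirectedSystem F (i2 · · ·)] {i : ∀ n, F n →+ Finf}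
  {G : ℕ → ℕ → Type*} [∀ k n, AddCommGroup (G k n)]
  {Ginf : ℕ → Type*} [∀ k, AddCommGroup (Ginf k)]
  {j2 : ∀ k n m : ℕ, n ≤ m → G k n →+ G k m} {j : ∀ k n, G k n →+ Ginf k}

theorem i2_eq_zero_of_i_eq_zero
    (hiker : ∀ n (x : F n), i n x = 0 → ∃ m, ∃ h : n ≤ m, i2 n m h x = 0)
    (hH : ∀ N, ∃ k, Nonempty (Interleaving i2 (j2 k) N))
    (hS : ∀ k n, Surjective (j k n))
    (hK : ∀ k n (y : G k n), j k n y = 0 → j2 k n (n + 1) n.le_succ y = 0)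
    (hjcompat : ∀ k n m (h : n ≤ m) (y : G k n), j k m (j2 k n m h y) = j k n y)
    {n : ℕ} {x : F n} (hx : i n x = 0) : i2 n (n + 3) (n.le_add_right 3) x = 0 := by
  obtain ⟨m, hnm, hm⟩ := hiker n x hx
  obtain ⟨k, ⟨I⟩⟩ := hH (m + n + 2)
  exact I.i2_eq_zero_of_i2_eq_zero (hS k) (hK k) (hjcompat k) (by omega) hnm (by omega) hm

theorem i_surjective (hicompat : ∀ n m (h : n ≤ m) (x : F n), i m (i2 n m h x) = i n x)
    (hiexh : ∀ z : Finf, ∃ n, ∃ x : F n, i n x = z)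
    (hH : ∀ N, ∃ k, Nonempty (Interleaving i2 (j2 k) N))
    (hS : ∀ k n, Surjective (j k n))
    (hK : ∀ k n (y : G k n), j k n y = 0 → j2 k n (n + 1) n.le_succ y = 0)
    (hjcompat : ∀ k n m (h : n ≤ m) (y : G k n), j k m (j2 k n m h y) = j k n y)
    (n : ℕ) : Surjective (i (n + 1)) := by
  intro w
  obtain ⟨m, x, rfl⟩ := hiexh w
  obtain ⟨k, ⟨I⟩⟩ := hH (m + n + 3)
  obtain ⟨x', hx'⟩ := I.range_i2_le_range_i2 (hS k) (hK k) (hjcompat k) (n := n) (m := m + n + 1)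
    (by omega) (by omega) ⟨i2 m (m + n + 1) (by omega) x, rfl⟩
  refine ⟨x', ?_⟩
  rw [← hicompat (n + 1) (m + n + 1 + 3) (by omega) x', hx', hicompat, hicompat]

theorem bijective_i_comp_ofLimit
    (hicompat : ∀ n m (h : n ≤ m) (x : F n), i m (i2 n m h x) = i n x)
    (hiexh : ∀ z : Finf, ∃ n, ∃ x : F n, i n x = z)
    (hiker : ∀ n (x : F n), i n x = 0 → ∃ m, ∃ h : n ≤ m, i2 n m h x = 0)
    (hH : ∀ N, ∃ k, Nonempty (Interleaving i2 (j2 k) N))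
    (hS : ∀ k n, Surjective (j k n))
    (hK : ∀ k n (y : G k n), j k n y = 0 → j2 k n (n + 1) n.le_succ y = 0)
    (hjcompat : ∀ k n m (h : n ≤ m) (y : G k n), j k m (j2 k n m h y) = j k n y)
    {k : ℕ} (I : Interleaving i2 (j2 k) 4) :
    Bijective ((i 4).comp (I.ofLimit (hS k) (hK k) 1)) := by
  refine ⟨(injective_iff_map_eq_zero _).2 fun z hz ↦ ?_, fun w ↦ ?_⟩
  · obtain ⟨x, rfl⟩ := I.toLimit_surjective (hS k) (hjcompat k) (n := 0) (by omega) z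
    rw [AddMonoidHom.comp_apply, I.ofLimit_toLimit (hS k) (hK k) (by omega), hicompat] at hz
    rw [← I.toLimit_ofLimit (hS k) (hK k) (hjcompat k) (n := 1) le_rfl (I.toLimit (j k) 1 x),
      I.ofLimit_toLimit (hS k) (hK k) (by omega),
      i2_eq_zero_of_i_eq_zero hiker hH hS hK hjcompat hz, map_zero]
  · obtain ⟨x, rfl⟩ := i_surjective hicompat hiexh hH hS hK hjcompat 0 w
    exact ⟨I.toLimit (j k) 1 x, by
      rw [AddMonoidHom.comp_apply, I.ofLimit_toLimit (hS k) (hK k) (by omega), hicompat]⟩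

end DirectLimit

end DirectLimitInterleaving

/-- Under the direct-system setup with (H), (S), (K), if each `G^k_∞` is isomorphic
to `ℤ` then `F_∞` is isomorphic to `ℤ`. -/
theorem finf_iso_int
    (F : ℕ → Type) [∀ n, AddCommGroup (F n)]
    (Finf : Type) [AddCommGroup Finf]
    (i2 : ∀ n m : ℕ, n ≤ m → (F n →+ F m))
    (i : ∀ n, F n →+ Finf)
    (hFid : ∀ (n : ℕ) (x : F n), i2 n n le_rfl x = x)
    (hFcomp : ∀ (n m l : ℕ) (h1 : n ≤ m) (h2 : m ≤ l) (x : F n),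
      i2 m l h2 (i2 n m h1 x) = i2 n l (h1.trans h2) x)
    (hicompat : ∀ (n m : ℕ) (h : n ≤ m) (x : F n), i m (i2 n m h x) = i n x)
    (hiexh : ∀ z : Finf, ∃ (n : ℕ) (x : F n), i n x = z)
    (hiker : ∀ (n : ℕ) (x : F n), i n x = 0 → ∃ (m : ℕ) (h : n ≤ m), i2 n m h x = 0)
    (G : ℕ → ℕ → Type) [∀ k n, AddCommGroup (G k n)]
    (Ginf : ℕ → Type) [∀ k, AddCommGroup (Ginf k)]
    (j2 : ∀ (k n m : ℕ), n ≤ m → (G k n →+ G k m))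
    (j : ∀ k n, G k n →+ Ginf k)
    (hjcompat : ∀ (k n m : ℕ) (h : n ≤ m) (y : G k n), j k m (j2 k n m h y) = j k n y)
    (hH : ∀ n₀ : ℕ, ∃ (k : ℕ) (a : ∀ n, F n →+ G k (n+1)) (b : ∀ n, G k n →+ F (n+1)),
      (∀ n, n + 1 ≤ n₀ → ∀ x : F n,
        a (n+1) (i2 n (n+1) (by omega) x) = j2 k (n+1) (n+2) (by omega) (a n x)) ∧
      (∀ n, n + 1 ≤ n₀ → ∀ y : G k n,
        b (n+1) (j2 k n (n+1) (by omega) y) = i2 (n+1) (n+2) (by omega) (b n y)) ∧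
      (∀ n, n + 1 ≤ n₀ → ∀ x : F n, b (n+1) (a n x) = i2 n (n+2) (by omega) x) ∧
      (∀ n, n + 1 ≤ n₀ → ∀ y : G k n, a (n+1) (b n y) = j2 k n (n+2) (by omega) y))
    (hS : ∀ k n, Function.Surjective (j k n))
    (hK : ∀ (k n : ℕ) (y : G k n), j k n y = 0 → j2 k n (n+1) (by omega) y = 0)
    (hZ : ∀ k, Nonempty (Ginf k ≃+ ℤ))
    : Nonempty (Finf ≃+ ℤ) := by
  have : DirectedSystem F (i2 · · ·) := ⟨hFid, fun _ _ _ h1 h2 x ↦ hFcomp _ _ _ h1 h2 x⟩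
  have hI : ∀ N, ∃ k, Nonempty (DirectLimitInterleaving.Interleaving i2 (j2 k) N) := fun N ↦
    let ⟨k, a, b, ha, _, hba, hab⟩ := hH N
    ⟨k, ⟨a, b, ha, hba, hab⟩⟩
  obtain ⟨k, ⟨I⟩⟩ := hI 4
  obtain ⟨ψ⟩ := hZ k
  exact ⟨(AddEquiv.ofBijective _ (DirectLimitInterleaving.bijective_i_comp_ofLimit hicompat hiexh
    hiker hI hS hK hjcompat I)).symm.trans ψ⟩
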